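/- Let f : I → I be a continuous map of a compact interval and let U ⊂ I be an open interval that is regularly returning, i.e. fⁿ(∂U) ∩ U = ∅ for all n ≥ 0. If A is a connected component of f⁻ᵐ(U) and B is a connected component of f⁻ⁿ(U) for some m, n ≥ 0 and A ∩ B ≠ ∅, then A ⊆ B or B ⊆ A. -/
import Mathlib

/-- The frontier of a connected component of an open set is contained in the
frontier of the set. -/
lemma frontier_connectedComponentIn_subset {S : Set ℝ} (hS : IsOpen S) (x : ℝ) :
    frontier (connectedComponentIn S x) ⊆ frontier S := by
  intro z hz
  have hAopen : IsOpen (connectedComponentIn S x) := hS.connectedComponentIn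
  rw [hAopen.frontier_eq] at hz
  obtain ⟨hzc, hzA⟩ := hz
  have hzS : z ∉ S := by
    intro hzS
    have hnhds : connectedComponentIn S z ∈ nhds z :=
      connectedComponentIn_mem_nhds (hS.mem_nhds hzS)
    obtain ⟨w, hw1, hw2⟩ := mem_closure_iff_nhds.mp hzc _ hnhds
    have e1 := connectedComponentIn_eq hw1
    have e2 := connectedComponentIn_eq hw2
    exact hzA (by rw [e2, ← e1]; exact mem_connectedComponentIn hzS)
  constructor
  · exact closure_mono (connectedComponentIn_subset S x) hzc
  · rwa [hS.interior_eq]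

/-- If `m ≤ n`, a component of `f^[n] ⁻¹' U` meeting a component of `f^[m] ⁻¹' U`
is contained in it. -/
lemma pullback_nested (f : ℝ → ℝ) (hf : Continuous f) (U : Set ℝ) (hUopen : IsOpen U)
    (hreg : ∀ n : ℕ, (f^[n] '' frontier U) ∩ U = ∅)
    (m n : ℕ) (hmn : m ≤ n) (x y : ℝ)
    (hAB : ((connectedComponentIn (f^[m] ⁻¹' U) x) ∩
      (connectedComponentIn (f^[n] ⁻¹' U) y)).Nonempty) :
    connectedComponentIn (f^[n] ⁻¹' U) y ⊆ connectedComponentIn (f^[m] ⁻¹' U) x := by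
  set S : Set ℝ := f^[m] ⁻¹' U with hS
  set A : Set ℝ := connectedComponentIn S x with hA
  set B : Set ℝ := connectedComponentIn (f^[n] ⁻¹' U) y with hB
  have hSopen : IsOpen S := hUopen.preimage (hf.iterate m)
  have hAopen : IsOpen A := hSopen.connectedComponentIn
  -- frontier A misses f^[n] ⁻¹' U
  have hfrontA : ∀ z ∈ frontier A, z ∉ f^[n] ⁻¹' U := by
    intro z hz hzn
    have h1 : z ∈ frontier S := frontier_connectedComponentIn_subset hSopen x hz
    have h2 : f^[m] z ∈ frontier U := (hf.iterate m).frontier_preimage_subset U h1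
    have h3 : f^[n] z ∈ f^[n - m] '' frontier U := by
      have : f^[n] z = f^[n - m] (f^[m] z) := by
        rw [← Function.iterate_add_apply, Nat.sub_add_cancel hmn]
      exact this ▸ Set.mem_image_of_mem _ h2
    have : f^[n] z ∈ (f^[n - m] '' frontier U) ∩ U := ⟨h3, hzn⟩
    rw [hreg (n - m)] at this
    exact this
  -- B is disjoint from frontier A
  have hBfront : ∀ z ∈ B, z ∉ frontier A := fun z hzB hzA =>
    hfrontA z hzA (connectedComponentIn_subset _ _ hzB)
  -- B ⊆ A ∪ (closure A)ᶜ
  have hBsub : B ⊆ A ∪ (closure A)ᶜ := by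
    intro z hz
    by_cases hzA : z ∈ A
    · exact Or.inl hzA
    · refine Or.inr fun hzc => hBfront z hz ?_
      rw [hAopen.frontier_eq]
      exact ⟨hzc, hzA⟩
  refine IsPreconnected.subset_left_of_subset_union hAopen
    isClosed_closure.isOpen_compl
    (disjoint_compl_right.mono_left subset_closure)
    hBsub ?_ isPreconnected_connectedComponentIn
  obtain ⟨w, hwA, hwB⟩ := hAB
  exact ⟨w, hwB, hwA⟩

/-- Pullbacks of a regularly returning interval are nested or disjoint. -/
theorem stmt_0 (a b : ℝ) (hab : a ≤ b) (f : ℝ → ℝ) (hf : Continuous f)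
    (hmaps : Set.MapsTo f (Set.Icc a b) (Set.Icc a b))
    (U : Set ℝ) (hUopen : IsOpen U) (hUsub : U ⊆ Set.Icc a b) (hUconn : U.OrdConnected)
    (hreg : ∀ n : ℕ, (f^[n] '' frontier U) ∩ U = ∅)
    (m n : ℕ) (A B : Set ℝ) (x y : ℝ)
    (hx : x ∈ f^[m] ⁻¹' U) (hA : A = connectedComponentIn (f^[m] ⁻¹' U) x)
    (hy : y ∈ f^[n] ⁻¹' U) (hB : B = connectedComponentIn (f^[n] ⁻¹' U) y)
    (hAB : (A ∩ B).Nonempty) :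
    A ⊆ B ∨ B ⊆ A := by
  subst hA hB
  rcases le_total m n with hmn | hnm
  · exact Or.inr (pullback_nested f hf U hUopen hreg m n hmn x y hAB)
  · refine Or.inl (pullback_nested f hf U hUopen hreg n m hnm y x ?_)
    obtain ⟨w, h1, h2⟩ := hAB
    exact ⟨w, h2, h1⟩
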